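/- arXiv:1010.6049 — 3 statements merged into one kernel-verified Lean document; each statement's English description precedes it below -/
import Mathlib

section
/- Define N(ρ) = −min_{W ∈ 𝒲} tr(ρW). Then N(ρ) = 0 for every biseparable state ρ on ℂ^{d_1}⊗⋯⊗ℂ^{d_n}. -/
open Matrix Finset ComplexOrder

abbrev MatD {n : ℕ} (d : Fin n → ℕ) :=
  Matrix ((a : Fin n) → Fin (d a)) ((a : Fin n) → Fin (d a)) ℂ

/-- The partial transpose with respect to the subset `M` of tensor factors. -/
def ptrans {n : ℕ} (d : Fin n → ℕ) (M : Finset (Fin n)) (X : MatD d) : MatD d :=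
  fun i j => X (fun a => if a ∈ M then j a else i a) (fun a => if a ∈ M then i a else j a)

/-- The feasible set 𝒲: Hermitian `W` such that for every nonempty strict subset `M`
there are `0 ≤ P_M ≤ 𝟙` and `0 ≤ Q_M ≤ 𝟙` with `W = P_M + Q_M^{T_M}`. -/
def FeasibleW {n : ℕ} (d : Fin n → ℕ) (W : MatD d) : Prop :=
  W.IsHermitian ∧
  ∀ M : Finset (Fin n), M.Nonempty → M ≠ Finset.univ →
    ∃ P Q : MatD d, P.PosSemidef ∧ (1 - P).PosSemidef ∧
      Q.PosSemidef ∧ (1 - Q).PosSemidef ∧ W = P + ptrans d M Q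

/-- `N(ρ) = − min_{W ∈ 𝒲} tr(ρ W)` (the minimum is attained since 𝒲 is compact;
it is expressed here as an infimum). -/
noncomputable def Nval {n : ℕ} (d : Fin n → ℕ) (ρ : MatD d) : ℝ :=
  - sInf {r : ℝ | ∃ W : MatD d, FeasibleW d W ∧ r = ((ρ * W).trace).re}

/-- Separability with respect to the bipartition `M|M̄` (entrywise tensor product). -/
def IsSepState {n : ℕ} (d : Fin n → ℕ) (M : Finset (Fin n)) (ρ : MatD d) : Prop :=
  ∃ (m : ℕ) (q : Fin m → ℝ)
    (σ : Fin m → Matrix ((a : {a : Fin n // a ∈ M}) → Fin (d a.1))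
                        ((a : {a : Fin n // a ∈ M}) → Fin (d a.1)) ℂ)
    (τ : Fin m → Matrix ((a : {a : Fin n // a ∉ M}) → Fin (d a.1))
                        ((a : {a : Fin n // a ∉ M}) → Fin (d a.1)) ℂ),
    (∀ k, 0 ≤ q k) ∧ (∑ k, q k = 1) ∧
    (∀ k, (σ k).PosSemidef ∧ (σ k).trace = 1) ∧
    (∀ k, (τ k).PosSemidef ∧ (τ k).trace = 1) ∧
    (∀ i j, ρ i j = ∑ k, (q k : ℂ) * σ k (fun a => i a.1) (fun a => j a.1)
                                    * τ k (fun a => i a.1) (fun a => j a.1))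

def bipartitions (n : ℕ) : Finset (Finset (Fin n)) :=
  Finset.univ.filter (fun M : Finset (Fin n) => M.Nonempty ∧ M ≠ Finset.univ)

/-- A biseparable state. -/
def IsBiseparable {n : ℕ} (d : Fin n → ℕ) (ρ : MatD d) : Prop :=
  ∃ (p : Finset (Fin n) → ℝ) (σ : Finset (Fin n) → MatD d),
    (∀ M, 0 ≤ p M) ∧
    (∑ M ∈ bipartitions n, p M) = 1 ∧
    (∀ M ∈ bipartitions n, IsSepState d M (σ M)) ∧
    ρ = ∑ M ∈ bipartitions n, (p M : ℂ) • σ M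

/-! For a state `σ` separable across `M|M̄` and `W = P + Q^{T_M}` with `P, Q ≥ 0`, moving the
partial transpose across the trace gives `tr(σW) = tr(σP) + tr(σ^{T_M}Q)`. The partial transpose of a
separable state is again separable (transpose the factors on `M`), hence positive semidefinite, so
both traces are nonnegative. By linearity `tr(ρW) ≥ 0` for every biseparable `ρ` and every
`W ∈ 𝒲`, and `W = 0 ∈ 𝒲` attains the value `0`. -/

namespace Matrix.PosSemidef

variable {ι : Type*} [Fintype ι] [DecidableEq ι]

open scoped MatrixOrder in
theorem trace_mul_nonneg {A B : Matrix ι ι ℂ} (hA : A.PosSemidef) (hB : B.PosSemidef) :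
    0 ≤ (A * B).trace := by
  obtain ⟨C, rfl⟩ := CStarAlgebra.nonneg_iff_eq_star_mul_self.mp hA.nonneg
  rw [star_eq_conjTranspose, trace_mul_cycle, trace_mul_cycle]
  exact (hB.mul_mul_conjTranspose_same C).trace_nonneg

end Matrix.PosSemidef

section

variable {n : ℕ} {d : Fin n → ℕ}

open scoped Kronecker

def mixIndex (M : Finset (Fin n)) (i j : (a : Fin n) → Fin (d a)) : (a : Fin n) → Fin (d a) :=
  fun a => if a ∈ M then j a else i a

theorem mixIndex_mixIndex (M : Finset (Fin n)) (i j : (a : Fin n) → Fin (d a)) :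
    mixIndex M (mixIndex M i j) (mixIndex M j i) = i := by
  ext a
  by_cases ha : a ∈ M <;> simp [mixIndex, ha]

theorem ptrans_apply (M : Finset (Fin n)) (X : MatD d) (i j : (a : Fin n) → Fin (d a)) :
    ptrans d M X i j = X (mixIndex M i j) (mixIndex M j i) := rfl

theorem trace_mul_ptrans (M : Finset (Fin n)) (A B : MatD d) :
    (A * ptrans d M B).trace = (ptrans d M A * B).trace := by
  have swap : Function.Involutive
      (fun p : ((a : Fin n) → Fin (d a)) × ((a : Fin n) → Fin (d a)) =>
      (mixIndex M p.1 p.2, mixIndex M p.2 p.1)) := fun p =>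
    Prod.ext (mixIndex_mixIndex M p.1 p.2) (mixIndex_mixIndex M p.2 p.1)
  simp only [Matrix.trace, Matrix.diag, mul_apply, ← Fintype.sum_prod_type']
  refine (Fintype.sum_equiv swap.toPerm _ _ fun p => ?_).symm
  simp [ptrans_apply, mixIndex_mixIndex]

theorem feasibleW_zero : FeasibleW d 0 :=
  ⟨isHermitian_zero, fun _ _ _ =>
    ⟨0, 0, .zero, by simpa using .one, .zero, by simpa using .one, (zero_add _).symm⟩⟩

def splitIndex (M : Finset (Fin n)) (i : (a : Fin n) → Fin (d a)) :
    ((a : {a : Fin n // a ∈ M}) → Fin (d a.1)) × ((a : {a : Fin n // a ∉ M}) → Fin (d a.1)) :=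
  (fun a => i a.1, fun a => i a.1)

variable {M : Finset (Fin n)}

theorem IsSepState.posSemidef {ρ : MatD d} (h : IsSepState d M ρ) : ρ.PosSemidef := by
  obtain ⟨m, q, σ, τ, hq, -, hσ, hτ, hρ⟩ := h
  have hρ_sum :
      ρ = ∑ k, (q k : ℂ) • (σ k ⊗ₖ τ k).submatrix (splitIndex M) (splitIndex M) := by
    ext i j
    simp [hρ, splitIndex, Matrix.sum_apply, mul_assoc]
  rw [hρ_sum]
  exact posSemidef_sum _ fun k _ =>
    (((hσ k).1.kronecker (hτ k).1).submatrix _).smul (Complex.zero_le_real.mpr (hq k))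

theorem IsSepState.isSepState_ptrans {ρ : MatD d} (h : IsSepState d M ρ) :
    IsSepState d M (ptrans d M ρ) := by
  obtain ⟨m, q, σ, τ, hq, hq_sum, hσ, hτ, hρ⟩ := h
  refine ⟨m, q, fun k => (σ k)ᵀ, τ, hq, hq_sum,
    fun k => ⟨(hσ k).1.transpose, by rw [trace_transpose, (hσ k).2]⟩, hτ, fun i j => ?_⟩
  have hM (i j : (a : Fin n) → Fin (d a)) : (fun a : {a // a ∈ M} => mixIndex M i j a.1) =
      fun a : {a // a ∈ M} => j a.1 :=
    funext fun a => if_pos a.2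
  have hMc (i j : (a : Fin n) → Fin (d a)) : (fun a : {a // a ∉ M} => mixIndex M i j a.1) =
      fun a : {a // a ∉ M} => i a.1 :=
    funext fun a => if_neg a.2
  simp only [ptrans_apply, hρ, hM, hMc, transpose_apply]

theorem IsSepState.trace_mul_nonneg {σ P Q : MatD d} (h : IsSepState d M σ)
    (hP : P.PosSemidef) (hQ : Q.PosSemidef) : 0 ≤ (σ * (P + ptrans d M Q)).trace := by
  rw [Matrix.mul_add, trace_add, trace_mul_ptrans]
  exact add_nonneg (h.posSemidef.trace_mul_nonneg hP)
    (h.isSepState_ptrans.posSemidef.trace_mul_nonneg hQ)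

theorem IsBiseparable.trace_mul_nonneg {ρ W : MatD d} (h : IsBiseparable d ρ)
    (hW : FeasibleW d W) : 0 ≤ (ρ * W).trace := by
  obtain ⟨p, σ, hp, -, hσ, rfl⟩ := h
  rw [Matrix.sum_mul, trace_sum]
  refine sum_nonneg fun M hM => ?_
  obtain ⟨hM_ne, hM_univ⟩ := (mem_filter.mp hM).2
  obtain ⟨P, Q, hP, -, hQ, -, rfl⟩ := hW.2 M hM_ne hM_univ
  rw [Matrix.smul_mul, trace_smul, smul_eq_mul]
  exact mul_nonneg (Complex.zero_le_real.mpr (hp M)) ((hσ M hM).trace_mul_nonneg hP hQ)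

end

/-- `N` vanishes on biseparable states. -/
theorem Nval_eq_zero_of_biseparable {n : ℕ} (d : Fin n → ℕ) (ρ : MatD d)
    (h : IsBiseparable d ρ) : Nval d ρ = 0 := by
  have hmin : IsLeast {r : ℝ | ∃ W : MatD d, FeasibleW d W ∧ r = ((ρ * W).trace).re} 0 :=
    ⟨⟨0, feasibleW_zero, by simp⟩, by
      rintro _ ⟨W, hW, rfl⟩
      exact (Complex.nonneg_iff.mp (h.trace_mul_nonneg hW)).1⟩
  rw [Nval, hmin.csInf_eq, neg_zero]
end

section
/- Let Λ be a trace-preserving completely positive map on matrices over ℂ^{d_1}⊗⋯⊗ℂ^{d_n} with Kraus operators of tensor-product form, Λ(ρ) = Σ_i K_i ρ K_i†, K_i = A_i ⊗ B_i ⊗ ⋯ ⊗ F_i, Σ_i K_i† K_i = 𝟙, and let Λ†(Y) = Σ_i K_i† Y K_i be its adjoint map. If W ∈ 𝒲, then Λ†(W) ∈ 𝒲. That is, the adjoint of a separable trace-preserving operation maps normalized fully decomposable operators to normalized fully decomposable operators. -/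
open Matrix Finset ComplexOrder

/-- The tensor product `A 0 ⊗ A 1 ⊗ ⋯ ⊗ A (n-1)` of local operators. -/
def tensorOpD {n : ℕ} (d : Fin n → ℕ)
    (A : (a : Fin n) → Matrix (Fin (d a)) (Fin (d a)) ℂ) : MatD d :=
  fun i j => ∏ a, A a (i a) (j a)

lemma ptrans_one {n : ℕ} (d : Fin n → ℕ) (M : Finset (Fin n)) :
    ptrans d M (1 : MatD d) = 1 := by
  ext i j
  simp only [ptrans, Matrix.one_apply]
  by_cases h : i = j
  · subst h; simp
  · rw [if_neg h, if_neg]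
    intro hc
    apply h
    funext a
    have := congrFun hc a
    by_cases ha : a ∈ M
    · simp [ha] at this; exact this.symm
    · simpa [ha] using this

lemma ptrans_ptrans {n : ℕ} (d : Fin n → ℕ) (M : Finset (Fin n)) (X : MatD d) :
    ptrans d M (ptrans d M X) = X := by
  ext i j
  simp only [ptrans]
  congr 1 <;> (funext a; by_cases ha : a ∈ M <;> simp [ha])

lemma ptrans_sum {n : ℕ} (d : Fin n → ℕ) (M : Finset (Fin n)) {ι : Type*} (s : Finset ι)
    (f : ι → MatD d) : ptrans d M (∑ i ∈ s, f i) = ∑ i ∈ s, ptrans d M (f i) := by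
  ext i j
  simp [ptrans, Matrix.sum_apply]

lemma mul_mid {a b c d x : ℂ} (h : a * b = c * d) : a * x * b = c * x * d := by
  rw [mul_right_comm a x b, mul_right_comm c x d, h]

/-- Key computation: conjugation by a tensor-product operator intertwines with the
partial transpose, up to entrywise conjugation of the factors in `M`. -/
lemma key_ptrans {n : ℕ} (d : Fin n → ℕ) (M : Finset (Fin n)) (X : MatD d)
    (B : (a : Fin n) → Matrix (Fin (d a)) (Fin (d a)) ℂ) :
    (tensorOpD d B)ᴴ * ptrans d M X * tensorOpD d B
      = ptrans d M ((tensorOpD d (fun a => if a ∈ M then (B a).map star else B a))ᴴ * X *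
          tensorOpD d (fun a => if a ∈ M then (B a).map star else B a)) := by
  classical
  set L := tensorOpD d (fun a => if a ∈ M then (B a).map star else B a) with hL
  ext i j
  simp only [ptrans, Matrix.mul_apply, Matrix.conjTranspose_apply, Finset.sum_mul]
  rw [Finset.sum_comm]
  rw [← Finset.sum_product', ← Finset.sum_product']
  apply Finset.sum_nbij' (i := fun pq => (fun a => if a ∈ M then pq.1 a else pq.2 a,
      fun a => if a ∈ M then pq.2 a else pq.1 a))
    (j := fun pq => (fun a => if a ∈ M then pq.1 a else pq.2 a,
      fun a => if a ∈ M then pq.2 a else pq.1 a))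
  · intro pq _; exact Finset.mem_univ _
  · intro pq _; exact Finset.mem_univ _
  · rintro ⟨p, q⟩ -
    simp only [Prod.mk.injEq]
    constructor <;> (funext a; by_cases ha : a ∈ M <;> simp [ha])
  · rintro ⟨p, q⟩ -
    simp only [Prod.mk.injEq]
    constructor <;> (funext a; by_cases ha : a ∈ M <;> simp [ha])
  · rintro ⟨p, q⟩ _
    simp only [hL, tensorOpD, star_prod]
    refine mul_mid ?_
    rw [← Finset.prod_mul_distrib, ← Finset.prod_mul_distrib]
    refine Finset.prod_congr rfl fun a _ => ?_
    by_cases ha : a ∈ M <;> simp [ha, Matrix.map_apply, mul_comm]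

lemma posSemidef_sum {n : ℕ} {d : Fin n → ℕ} {ι : Type*} (s : Finset ι)
    (f : ι → MatD d) (h : ∀ i ∈ s, (f i).PosSemidef) : (∑ i ∈ s, f i).PosSemidef :=
  Finset.sum_induction f _ (fun _ _ ha hb => ha.add hb) Matrix.PosSemidef.zero h

/-- the adjoint `Λ†(W) = Σ_i K_i† W K_i` of a trace-preserving separable
operation (Kraus operators in tensor-product form, `Σ_i K_i† K_i = 𝟙`) maps 𝒲 to 𝒲. -/
theorem adjoint_of_separable_channel_preserves_FeasibleW {n : ℕ} (d : Fin n → ℕ) (m : ℕ)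
    (A : Fin m → (a : Fin n) → Matrix (Fin (d a)) (Fin (d a)) ℂ)
    (hTP : ∑ i, (tensorOpD d (A i))ᴴ * tensorOpD d (A i) = 1)
    (W : MatD d) (hW : FeasibleW d W) :
    FeasibleW d (∑ i, (tensorOpD d (A i))ᴴ * W * tensorOpD d (A i)) := by
  classical
  obtain ⟨hHerm, hDecomp⟩ := hW
  constructor
  · rw [Matrix.IsHermitian, Matrix.conjTranspose_sum]
    refine Finset.sum_congr rfl fun i _ => ?_
    simp [Matrix.conjTranspose_mul, Matrix.mul_assoc, hHerm.eq]
  · intro M hM hMne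
    obtain ⟨P, Q, hP, hP1, hQ, hQ1, hW⟩ := hDecomp M hM hMne
    set K := fun i => tensorOpD d (A i) with hK
    set L := fun i => tensorOpD d (fun a => if a ∈ M then (A i a).map star else A i a)
      with hLdef
    have hLTP : ∑ i, (L i)ᴴ * (L i) = 1 := by
      have h2 : ∑ i, (K i)ᴴ * ptrans d M (1 : MatD d) * K i
          = ptrans d M (∑ i, (L i)ᴴ * 1 * L i) := by
        rw [ptrans_sum]
        exact Finset.sum_congr rfl fun i _ => key_ptrans d M 1 (A i)
      rw [ptrans_one] at h2
      simp only [Matrix.mul_one] at h2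
      have h3 := congrArg (ptrans d M) h2
      rw [ptrans_ptrans] at h3
      rw [← h3, hTP, ptrans_one]
    have hsub : ∀ (R : MatD d) (F : Fin m → MatD d), (∑ i, (F i)ᴴ * F i = 1) →
        ∑ i, (F i)ᴴ * (1 - R) * F i = 1 - ∑ i, (F i)ᴴ * R * F i := by
      intro R F hF
      have : ∀ i : Fin m, (F i)ᴴ * (1 - R) * F i = (F i)ᴴ * F i - (F i)ᴴ * R * F i := by
        intro i; rw [Matrix.mul_sub, Matrix.sub_mul, Matrix.mul_one]
      rw [Finset.sum_congr rfl fun i _ => this i, Finset.sum_sub_distrib, hF]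
    refine ⟨∑ i, (K i)ᴴ * P * K i, ∑ i, (L i)ᴴ * Q * L i, ?_, ?_, ?_, ?_, ?_⟩
    · exact posSemidef_sum _ _ fun i _ => hP.conjTranspose_mul_mul_same (K i)
    · rw [← hsub P K hTP]
      exact posSemidef_sum _ _ fun i _ => hP1.conjTranspose_mul_mul_same (K i)
    · exact posSemidef_sum _ _ fun i _ => hQ.conjTranspose_mul_mul_same (L i)
    · rw [← hsub Q L hLTP]
      exact posSemidef_sum _ _ fun i _ => hQ1.conjTranspose_mul_mul_same (L i)
    · rw [hW, ptrans_sum, ← Finset.sum_add_distrib]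
      refine Finset.sum_congr rfl fun i _ => ?_
      rw [Matrix.mul_add, Matrix.add_mul]
      congr 1
      exact key_ptrans d M Q (A i)
end

section
/- Let n > 3, k = ⌊(n+2)/3⌋ and B = {1, 4, 7, …, 3k−2}. Let W_Cln = (1/2)𝟙 − |Cl_n⟩⟨Cl_n| − (1/2) Σ_s ∏_{i∈B} (s_i g_i + 𝟙)/2 (sum over sign vectors s ∈ {±1}^k with at least two entries −1), and for 0 ≤ p ≤ 1 let ρ(p) = (1−p)|Cl_n⟩⟨Cl_n| + p·2^{−n}𝟙. Then tr(W_Cln · ρ(p)) = −1/2 + p(1/2 − 2^{−n} + (k+1)2^{−k−1}); in particular tr(W_Cln · ρ(p)) < 0 if and only if p < p_tol, where p_tol = (1 − 2^{−n+1} + (k+1)2^{−k})^{−1}. -/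
open Matrix Finset ComplexOrder

/-- Operators on `(ℂ²)^{⊗n}`, indexed by bit strings `{0,1}^n`. -/
abbrev QMat (n : ℕ) := Matrix (Fin n → Fin 2) (Fin n → Fin 2) ℂ

/-- The tensor product `A 0 ⊗ ⋯ ⊗ A (n-1)` of one-qubit operators. -/
def qtensor {n : ℕ} (A : Fin n → Matrix (Fin 2) (Fin 2) ℂ) : QMat n :=
  fun v w => ∏ a, A a (v a) (w a)

def PX : Matrix (Fin 2) (Fin 2) ℂ := !![0, 1; 1, 0]

def PZ : Matrix (Fin 2) (Fin 2) ℂ := !![1, 0; 0, -1]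

/-- The linear-cluster-state stabilizer generator: `g_1 = X_1 Z_2`,
`g_i = Z_{i-1} X_i Z_{i+1}` for `1 < i < n`, `g_n = Z_{n-1} X_n`. -/
def clGen (n : ℕ) (i : Fin n) : QMat n :=
  qtensor (fun a => if a = i then PX
    else if (a : ℕ) + 1 = (i : ℕ) ∨ (i : ℕ) + 1 = (a : ℕ) then PZ else 1)

/-- The projector `|Cl_n⟩⟨Cl_n| = 2^{-n} ∏_{i=1}^n (𝟙 + g_i)`. -/
noncomputable def clProj (n : ℕ) : QMat n :=
  ((2 : ℂ) ^ n)⁻¹ • ((List.finRange n).map (fun i => 1 + clGen n i)).prod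

/-- The witness `W_Cln = 𝟙/2 − |Cl_n⟩⟨Cl_n| − (1/2) Σ_s ∏_{i∈B} (s_i g_i + 𝟙)/2`, the
sum running over sign vectors `s ∈ {±1}^B` with at least two entries `−1` (encoded as
`s : Fin n → Bool` supported on `B`, `true` standing for `−1`). -/
noncomputable def Wcl (n : ℕ) (B : Finset (Fin n)) : QMat n :=
  (2 : ℂ)⁻¹ • 1 - clProj n -
    (2 : ℂ)⁻¹ • ∑ s ∈ Finset.univ.filter (fun s : Fin n → Bool =>
        (∀ i ∉ B, s i = false) ∧ 2 ≤ (B.filter (fun i => s i = true)).card),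
      ((B.sort (· ≤ ·)).map
        (fun i => (2 : ℂ)⁻¹ • ((if s i then (-1 : ℂ) else 1) • clGen n i + 1))).prod

/-- The noisy cluster state `ρ(p) = (1−p)|Cl_n⟩⟨Cl_n| + p 2^{−n} 𝟙`. -/
noncomputable def rhoCl (n : ℕ) (p : ℝ) : QMat n :=
  ((1 - p : ℝ) : ℂ) • clProj n + ((p * ((2 : ℝ) ^ n)⁻¹ : ℝ) : ℂ) • 1

/-!
The stabilizer generators `g_i` commute and square to `𝟙`, and every product of distinct
generators is traceless: at the site of one of them the local factor is `D X E` with `D`, `E`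
diagonal. Expanding, `tr ∏_{i ∈ T} (a_i g_i + b_i 𝟙) = 2ⁿ ∏_{i ∈ T} b_i`, while
`|Cl_n⟩⟨Cl_n|` absorbs every `g_i`. Hence each `∏_{i ∈ B} (s_i g_i + 𝟙)/2` has trace
`2^{n-|B|}` and is annihilated by `|Cl_n⟩⟨Cl_n|` as soon as some `s_i = -1`. Counting the
`2^{|B|} - 1 - |B|` sign vectors then gives `tr W`, and `tr (W |Cl_n⟩⟨Cl_n|) = -1/2`;
`tr (W ρ(p))` is affine in `p`.
-/

section Tensor

variable {n : ℕ}

theorem qtensor_mul (A B : Fin n → Matrix (Fin 2) (Fin 2) ℂ) :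
    qtensor A * qtensor B = qtensor (fun a => A a * B a) := by
  ext v w
  simp only [qtensor, Matrix.mul_apply, Fintype.prod_sum, Finset.prod_mul_distrib]

theorem qtensor_one : qtensor (fun _ : Fin n => (1 : Matrix (Fin 2) (Fin 2) ℂ)) = 1 := by
  ext v w
  by_cases h : v = w
  · subst h; simp [qtensor]
  · obtain ⟨a, ha⟩ := Function.ne_iff.mp h
    rw [Matrix.one_apply_ne h, qtensor]
    exact Finset.prod_eq_zero (Finset.mem_univ a) (Matrix.one_apply_ne ha)

theorem qtensor_smul (c : Fin n → ℂ) (A : Fin n → Matrix (Fin 2) (Fin 2) ℂ) :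
    qtensor (fun a => c a • A a) = (∏ a, c a) • qtensor A := by
  ext v w
  simp [qtensor, Finset.prod_mul_distrib]

theorem trace_qtensor (A : Fin n → Matrix (Fin 2) (Fin 2) ℂ) :
    (qtensor A).trace = ∏ a, (A a).trace := by
  simp only [Matrix.trace, Matrix.diag, qtensor, Finset.prod_univ_sum]
  rfl

theorem list_prod_map_qtensor {ι : Type*} (l : List ι)
    (A : ι → Fin n → Matrix (Fin 2) (Fin 2) ℂ) :
    (l.map (fun i => qtensor (A i))).prod = qtensor (fun a => (l.map (A · a)).prod) := by
  induction l with
  | nil => simp [qtensor_one]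
  | cons i l ih => simp only [List.map_cons, List.prod_cons, ih, qtensor_mul]

theorem qtensor_mul_comm_of_sitewise (A B : Fin n → Matrix (Fin 2) (Fin 2) ℂ) (ε : Fin n → ℂ)
    (h : ∀ a, A a * B a = ε a • (B a * A a)) :
    qtensor A * qtensor B = (∏ a, ε a) • (qtensor B * qtensor A) := by
  rw [qtensor_mul, qtensor_mul, funext h, qtensor_smul]

theorem trace_one_qmat : (1 : QMat n).trace = 2 ^ n := by
  simp

end Tensor

theorem PX_mul_self : PX * PX = 1 := by
  rw [PX, Matrix.mul_fin_two, Matrix.one_fin_two]; norm_num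

theorem PZ_mul_self : PZ * PZ = 1 := by
  rw [PZ, Matrix.mul_fin_two, Matrix.one_fin_two]; norm_num

theorem PX_mul_PZ : PX * PZ = -(PZ * PX) := by
  rw [PX, PZ, Matrix.mul_fin_two, Matrix.mul_fin_two]
  simp

theorem trace_diagonal_mul_PX_mul_diagonal (d e : Fin 2 → ℂ) :
    (diagonal d * (PX * diagonal e)).trace = 0 := by
  simp [PX, Matrix.trace_fin_two, Matrix.vecMul, dotProduct]

def clFactor {n : ℕ} (i a : Fin n) : Matrix (Fin 2) (Fin 2) ℂ :=
  if a = i then PX else if (a : ℕ) + 1 = (i : ℕ) ∨ (i : ℕ) + 1 = (a : ℕ) then PZ else 1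

section Generators

variable {n : ℕ}

theorem clGen_eq_qtensor (i : Fin n) : clGen n i = qtensor (clFactor i) := rfl

theorem clFactor_self (i : Fin n) : clFactor i i = PX := if_pos rfl

theorem exists_clFactor_eq_diagonal {i a : Fin n} (h : a ≠ i) :
    ∃ d, clFactor i a = diagonal d := by
  rw [clFactor, if_neg h]
  split_ifs
  · exact ⟨![1, -1], by ext r c; fin_cases r <;> fin_cases c <;> simp [PZ]⟩
  · exact ⟨1, diagonal_one.symm⟩

theorem clGen_mul_self (i : Fin n) : clGen n i * clGen n i = 1 := by
  have hsite (a : Fin n) : clFactor i a * clFactor i a = 1 := by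
    unfold clFactor; split_ifs <;> simp [PX_mul_self, PZ_mul_self]
  rw [clGen_eq_qtensor, qtensor_mul, funext hsite, qtensor_one]

theorem commute_clGen (i j : Fin n) : Commute (clGen n i) (clGen n j) := by
  wlog hij : (i : ℕ) ≤ j generalizing i j
  · exact (this j i (by omega)).symm
  by_cases hadj : (i : ℕ) + 1 = j
  · have hne : i ≠ j := Fin.ne_of_val_ne (by omega)
    have h := qtensor_mul_comm_of_sitewise (clFactor i) (clFactor j)
      (fun a => (if a = i then -1 else 1) * (if a = j then -1 else 1)) fun a => by
        unfold clFactor; split_ifs <;> simp_all [PX_mul_PZ]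
    rw [Finset.prod_mul_distrib, Fintype.prod_ite_eq', Fintype.prod_ite_eq', neg_one_mul, neg_neg,
      one_smul] at h
    exact h
  · have h := qtensor_mul_comm_of_sitewise (clFactor i) (clFactor j) 1 fun a => by
      unfold clFactor; split_ifs <;> simp_all <;> omega
    simp only [Pi.one_apply, Finset.prod_const_one, one_smul] at h
    exact h

theorem trace_list_prod_clGen {l : List (Fin n)} (hl : l ≠ []) (hnd : l.Nodup) :
    (l.map (clGen n)).prod.trace = 0 := by
  obtain ⟨m, hm⟩ := List.exists_mem_of_ne_nil l hl
  obtain ⟨l₁, l₂, rfl⟩ := List.append_of_mem hm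
  have hm' := (List.nodup_cons.mp (List.nodup_middle.mp hnd)).1
  rw [List.mem_append, not_or] at hm'
  have hdiag (l' : List (Fin n)) (h : m ∉ l') : ∃ d, (l'.map (clFactor · m)).prod = diagonal d :=
    List.prod_induction (fun M => ∃ d, M = diagonal d)
      (fun _ _ ⟨d, hd⟩ ⟨e, he⟩ => ⟨d * e, by rw [hd, he, diagonal_mul_diagonal]; rfl⟩)
      ⟨1, diagonal_one.symm⟩ (by
        simp only [List.mem_map]
        rintro _ ⟨j, hj, rfl⟩
        exact exists_clFactor_eq_diagonal (ne_of_mem_of_not_mem hj h).symm)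
  obtain ⟨d, hd⟩ := hdiag l₁ hm'.1
  obtain ⟨e, he⟩ := hdiag l₂ hm'.2
  rw [show clGen n = fun i => qtensor (clFactor i) from rfl, list_prod_map_qtensor, trace_qtensor]
  refine Finset.prod_eq_zero (Finset.mem_univ m) ?_
  simp only [List.map_append, List.map_cons, List.prod_append, List.prod_cons, hd, he,
    clFactor_self]
  exact trace_diagonal_mul_PX_mul_diagonal d e

end Generators

noncomputable def clAffine {n : ℕ} (a b : Fin n → ℂ) (i : Fin n) : QMat n :=
  a i • clGen n i + b i • 1

section Affine

variable {n : ℕ} (a b : Fin n → ℂ)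

theorem trace_list_prod_clGen_mul_list_prod_clAffine (t u : List (Fin n))
    (hnd : (u ++ t).Nodup) :
    ((u.map (clGen n)).prod * (t.map (clAffine a b)).prod).trace
      = (t.map b).prod * (u.map (clGen n)).prod.trace := by
  induction t generalizing u with
  | nil => simp
  | cons j t ih =>
    have hnd' : (u ++ [j] ++ t).Nodup := by simpa using hnd
    have hsplit : (u.map (clGen n)).prod * (clAffine a b j * (t.map (clAffine a b)).prod)
        = a j • (((u ++ [j]).map (clGen n)).prod * (t.map (clAffine a b)).prod)
          + b j • ((u.map (clGen n)).prod * (t.map (clAffine a b)).prod) := by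
      simp only [clAffine, List.map_append, List.map_singleton, List.prod_append,
        List.prod_singleton, add_mul, mul_add, smul_mul_assoc, mul_smul_comm, one_mul, mul_assoc]
    rw [List.map_cons, List.prod_cons, hsplit, trace_add, trace_smul, trace_smul, ih _ hnd',
      ih u (hnd'.sublist (by simp)), trace_list_prod_clGen (by simp) (hnd'.sublist (by simp))]
    simp only [List.map_cons, List.prod_cons, smul_eq_mul]
    ring

theorem trace_list_prod_clAffine {t : List (Fin n)} (hnd : t.Nodup) :
    (t.map (clAffine a b)).prod.trace = (t.map b).prod * 2 ^ n := by
  simpa [trace_one_qmat] using trace_list_prod_clGen_mul_list_prod_clAffine a b t [] hnd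

end Affine

section Projector

variable {n : ℕ}

theorem list_prod_one_add_clGen_mul_clGen {l : List (Fin n)} {i : Fin n} (hi : i ∈ l) :
    (l.map (fun j => 1 + clGen n j)).prod * clGen n i
      = (l.map (fun j => 1 + clGen n j)).prod := by
  induction l with
  | nil => simp at hi
  | cons j l ih =>
    rw [List.map_cons, List.prod_cons, mul_assoc]
    by_cases hil : i ∈ l
    · rw [ih hil]
    · obtain rfl : i = j := (List.mem_cons.mp hi).resolve_right hil
      have hcomm : Commute (clGen n i) (l.map (fun j => 1 + clGen n j)).prod :=
        Commute.list_prod_right _ _ fun _ hx => by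
          obtain ⟨j, -, rfl⟩ := List.mem_map.mp hx
          exact (Commute.one_right _).add_right (commute_clGen i j)
      rw [← hcomm.eq, ← mul_assoc, add_mul, one_mul, clGen_mul_self, add_comm]

theorem clProj_mul_clGen (i : Fin n) : clProj n * clGen n i = clProj n := by
  rw [clProj, smul_mul_assoc, list_prod_one_add_clGen_mul_clGen (List.mem_finRange i)]

theorem clProj_mul_list_prod_clAffine (a b : Fin n → ℂ) (t : List (Fin n)) :
    clProj n * (t.map (clAffine a b)).prod = (t.map (fun i => a i + b i)).prod • clProj n := by
  induction t with
  | nil => simp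
  | cons j t ih =>
    rw [List.map_cons, List.prod_cons, ← mul_assoc, clAffine, mul_add, mul_smul_comm,
      mul_smul_comm, clProj_mul_clGen, mul_one, ← add_smul, smul_mul_assoc, ih, smul_smul,
      List.map_cons, List.prod_cons]

theorem clProj_eq_smul_list_prod_clAffine :
    clProj n = ((2 : ℂ) ^ n)⁻¹ • ((List.finRange n).map (clAffine 1 1)).prod := by
  rw [clProj]
  congr 2
  exact List.map_congr_left fun i _ => by simp [clAffine, add_comm]

theorem clProj_mul_self : clProj n * clProj n = clProj n := by
  nth_rewrite 2 [clProj_eq_smul_list_prod_clAffine]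
  rw [mul_smul_comm, clProj_mul_list_prod_clAffine]
  simp [smul_smul, one_add_one_eq_two]

theorem trace_clProj : (clProj n).trace = 1 := by
  rw [clProj_eq_smul_list_prod_clAffine, trace_smul,
    trace_list_prod_clAffine _ _ (List.nodup_finRange n)]
  simp [Pi.one_def]

end Projector

theorem count_mod_three_eq_zero (n : ℕ) : Nat.count (· % 3 = 0) n = (n + 2) / 3 := by
  induction n with
  | zero => simp
  | succ n ih => rw [Nat.count_succ, ih]; split_ifs <;> omega

theorem card_filter_mod_three_eq_zero (n : ℕ) :
    #{i : Fin n | (i : ℕ) % 3 = 0} = (n + 2) / 3 := by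
  rw [← count_mod_three_eq_zero, Nat.count_eq_card_filter_range]
  exact Finset.card_bij (fun i _ => (i : ℕ)) (by simp) (by simp [Fin.val_inj])
    fun x hx => by
      rw [mem_filter, mem_range] at hx
      exact ⟨⟨x, hx.1⟩, by simpa using hx.2, rfl⟩

theorem card_filter_two_le_card_powerset {α : Type*} (B : Finset α) :
    #{S ∈ B.powerset | 2 ≤ #S} = 2 ^ #B - 1 - #B := by
  classical
  have hsmall : #{S ∈ B.powerset | ¬2 ≤ #S} = 1 + #B := by
    have : {S ∈ B.powerset | ¬2 ≤ #S} = B.powersetCard 0 ∪ B.powersetCard 1 := by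
      ext S
      simp only [mem_filter, mem_union, mem_powersetCard, mem_powerset]
      have : ¬2 ≤ #S ↔ #S = 0 ∨ #S = 1 := by omega
      rw [this]
      tauto
    rw [this, card_union_of_disjoint (pairwise_disjoint_powersetCard B (by norm_num)),
      card_powersetCard, card_powersetCard, Nat.choose_zero_right, Nat.choose_one_right]
  have htotal := card_filter_add_card_filter_not (s := B.powerset) (fun S => 2 ≤ #S)
  rw [card_powerset, hsmall] at htotal
  omega

section Witness

variable {n : ℕ} (B : Finset (Fin n))

def multiFlipSigns : Finset (Fin n → Bool) :=
  Finset.univ.filter (fun s : Fin n → Bool =>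
    (∀ i ∉ B, s i = false) ∧ 2 ≤ (B.filter (fun i => s i = true)).card)

noncomputable def clEigenProj (s : Fin n → Bool) : QMat n :=
  ((B.sort (· ≤ ·)).map
    (fun i => (2 : ℂ)⁻¹ • ((if s i then (-1 : ℂ) else 1) • clGen n i + 1))).prod

theorem Wcl_eq : Wcl n B
    = (2 : ℂ)⁻¹ • 1 - clProj n - (2 : ℂ)⁻¹ • ∑ s ∈ multiFlipSigns B, clEigenProj B s := rfl

theorem card_multiFlipSigns : #(multiFlipSigns B) = 2 ^ #B - 1 - #B := by
  rw [← card_filter_two_le_card_powerset]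
  refine Finset.card_bij' (fun s _ => B.filter (s · = true)) (fun S _ i => decide (i ∈ S))
    ?_ ?_ ?_ ?_
  · intro s hs
    simp only [multiFlipSigns, mem_filter, mem_univ, true_and, mem_powerset] at hs ⊢
    exact ⟨filter_subset _ _, hs.2⟩
  · intro S hS
    simp only [mem_filter, mem_powerset] at hS
    simp only [multiFlipSigns, mem_filter, mem_univ, true_and, decide_eq_true_eq,
      decide_eq_false_iff_not]
    refine ⟨fun i hi hiS => hi (hS.1 hiS), ?_⟩
    rw [filter_mem_eq_inter, inter_eq_right.mpr hS.1]
    exact hS.2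
  · intro s hs
    simp only [multiFlipSigns, mem_filter, mem_univ, true_and] at hs
    funext i
    by_cases hi : i ∈ B
    · simp [hi]
    · simp [hi, hs.1 i hi]
  · intro S hS
    simp only [mem_filter, mem_powerset] at hS
    ext i
    simpa using fun h => hS.1 h

theorem clEigenProj_eq (s : Fin n → Bool) :
    clEigenProj B s = ((B.sort (· ≤ ·)).map
      (clAffine (fun i => (2 : ℂ)⁻¹ * if s i then -1 else 1) fun _ => (2 : ℂ)⁻¹)).prod := by
  unfold clEigenProj
  congr 1
  exact List.map_congr_left fun i _ => by simp only [clAffine, smul_add, smul_smul]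

theorem trace_clEigenProj (s : Fin n → Bool) : (clEigenProj B s).trace = 2 ^ n / 2 ^ #B := by
  rw [clEigenProj_eq, trace_list_prod_clAffine _ _ (B.sort_nodup _), List.map_const',
    List.prod_replicate, length_sort, inv_pow, div_eq_inv_mul]

theorem clProj_mul_clEigenProj_eq_zero {s : Fin n → Bool} {i : Fin n} (hi : i ∈ B)
    (hs : s i = true) : clProj n * clEigenProj B s = 0 := by
  rw [clEigenProj_eq, clProj_mul_list_prod_clAffine, List.prod_eq_zero, zero_smul]
  exact List.mem_map.mpr ⟨i, (mem_sort _).mpr hi, by simp [hs]⟩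

theorem trace_Wcl_mul_clProj : (Wcl n B * clProj n).trace = -1 / 2 := by
  have hflip (s) (hs : s ∈ multiFlipSigns B) : (clEigenProj B s * clProj n).trace = 0 := by
    simp only [multiFlipSigns, mem_filter, mem_univ, true_and] at hs
    obtain ⟨i, hi⟩ := card_pos.mp (lt_of_lt_of_le two_pos hs.2)
    rw [mem_filter] at hi
    rw [trace_mul_comm, clProj_mul_clEigenProj_eq_zero B hi.1 hi.2, trace_zero]
  rw [Wcl_eq, sub_mul, sub_mul, smul_mul_assoc, smul_mul_assoc, one_mul, sum_mul,
    clProj_mul_self, trace_sub, trace_sub, trace_smul, trace_smul, trace_sum, sum_eq_zero hflip,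
    trace_clProj]
  norm_num

theorem trace_Wcl : (Wcl n B).trace
    = 2 ^ n / 2 - 1 - (2 ^ #B - 1 - #B) * 2 ^ n / 2 ^ (#B + 1) := by
  have hcard : (#(multiFlipSigns B) : ℂ) = 2 ^ #B - 1 - #B := by
    rw [card_multiFlipSigns, Nat.cast_sub, Nat.cast_sub] <;> push_cast
    · ring
    all_goals have := Nat.lt_two_pow_self (n := #B); omega
  rw [Wcl_eq, trace_sub, trace_sub, trace_smul, trace_smul, trace_sum,
    sum_congr rfl fun s _ => trace_clEigenProj B s, sum_const, nsmul_eq_mul, hcard, trace_clProj,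
    trace_one_qmat, smul_eq_mul, smul_eq_mul]
  ring

theorem trace_Wcl_mul_rhoCl (p : ℝ) :
    (Wcl n B * rhoCl n p).trace
      = ((-(1 / 2) + p * (1 / 2 - ((2 : ℝ) ^ n)⁻¹
          + (#B + 1) * ((2 : ℝ) ^ (#B + 1))⁻¹) : ℝ) : ℂ) := by
  rw [rhoCl, mul_add, mul_smul_comm, mul_smul_comm, mul_one, trace_add, trace_smul, trace_smul,
    trace_Wcl_mul_clProj, trace_Wcl, smul_eq_mul, smul_eq_mul]
  push_cast
  field_simp
  ring

end Witness

theorem one_sub_inv_two_pow_pred_add_eq {n : ℕ} (hn : n ≠ 0) (k : ℕ) (x : ℝ) :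
    1 - ((2 : ℝ) ^ (n - 1))⁻¹ + x * ((2 : ℝ) ^ k)⁻¹
      = 2 * (1 / 2 - ((2 : ℝ) ^ n)⁻¹ + x * ((2 : ℝ) ^ (k + 1))⁻¹) := by
  obtain ⟨m, rfl⟩ := Nat.exists_eq_succ_of_ne_zero hn
  rw [Nat.succ_sub_one, pow_succ, pow_succ]
  field_simp

theorem cluster_witness_trace_and_noise_tolerance_general
    (n : ℕ) (hn : 3 < n) (k : ℕ) (hk : k = (n + 2) / 3)
    (B : Finset (Fin n)) (hB : B = Finset.univ.filter (fun i : Fin n => (i : ℕ) % 3 = 0))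
    (p : ℝ) :
    (Wcl n B * rhoCl n p).trace
      = ((- (1 / 2) + p * (1 / 2 - ((2 : ℝ) ^ n)⁻¹
          + (k + 1) * ((2 : ℝ) ^ (k + 1))⁻¹) : ℝ) : ℂ) ∧
    ((Wcl n B * rhoCl n p).trace < 0 ↔
      p < (1 - ((2 : ℝ) ^ (n - 1))⁻¹ + (k + 1) * ((2 : ℝ) ^ k)⁻¹)⁻¹) := by
  have hcard : #B = k := by rw [hB, hk, card_filter_mod_three_eq_zero]
  have htrace := trace_Wcl_mul_rhoCl B p
  rw [hcard] at htrace
  refine ⟨htrace, ?_⟩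
  have hinv : ((2 : ℝ) ^ n)⁻¹ ≤ 1 / 2 := by
    rw [one_div]
    exact inv_anti₀ two_pos (le_self_pow₀ one_le_two (by omega))
  set c := 1 / 2 - ((2 : ℝ) ^ n)⁻¹ + (k + 1) * ((2 : ℝ) ^ (k + 1))⁻¹ with hc_def
  have hc : 0 < c := by
    have : (0 : ℝ) < (k + 1) * ((2 : ℝ) ^ (k + 1))⁻¹ := by positivity
    linarith
  rw [htrace, ← Complex.ofReal_zero, Complex.real_lt_real,
    one_sub_inv_two_pow_pred_add_eq (by omega), ← hc_def, ← one_div, lt_div_iff₀ (by positivity)]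
  constructor <;> intro h <;> linarith

/-- for `n > 3`, `k = ⌊(n+2)/3⌋` and `B = {1, 4, …, 3k−2}` (the qubits
with index `≡ 1 mod 3`, i.e. `0`-indexed positions divisible by 3), one has
`tr(W_Cln ρ(p)) = −1/2 + p(1/2 − 2^{−n} + (k+1)2^{−k−1})`; in particular the expectation
value is negative iff `p < p_tol = (1 − 2^{−n+1} + (k+1)2^{−k})⁻¹`. -/
theorem cluster_witness_trace_and_noise_tolerance
    (n : ℕ) (hn : 3 < n) (k : ℕ) (hk : k = (n + 2) / 3)
    (B : Finset (Fin n)) (hB : B = Finset.univ.filter (fun i : Fin n => (i : ℕ) % 3 = 0))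
    (p : ℝ) (hp0 : 0 ≤ p) (hp1 : p ≤ 1) :
    (Wcl n B * rhoCl n p).trace
      = ((- (1 / 2) + p * (1 / 2 - ((2 : ℝ) ^ n)⁻¹
          + (k + 1) * ((2 : ℝ) ^ (k + 1))⁻¹) : ℝ) : ℂ) ∧
    ((Wcl n B * rhoCl n p).trace < 0 ↔
      p < (1 - ((2 : ℝ) ^ (n - 1))⁻¹ + (k + 1) * ((2 : ℝ) ^ k)⁻¹)⁻¹) :=
  cluster_witness_trace_and_noise_tolerance_general n hn k hk B hB p
end
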